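/- Let ν ≥ 2 be an integer and let p₁ satisfy 1/(2^ν − 1) < p₁ < 2^{−(ν−1)}. Define the source p on n = 2^ν − 1 symbols by p(1) = p₁ and p(i) = (1 − p₁)/(2^ν − 2) for 2 ≤ i ≤ n. Then p is a monotonically nonincreasing probability mass function, R*_opt(p) = ν + lg(1 − p₁) − lg(2^ν − 2), and every codeword-length vector l ∈ ℒ_n with R*(l,p) = R*_opt(p) satisfies l(1) = ν − 1. (This shows tightness of the bound 'p(1) ≤ 1/(2^ν − 1) implies an optimal code with l(1) ≥ ν exists'.) -/

import Mathlib

/-- A source: a positive, monotonically nonincreasing probability mass function on `Fin n`. -/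
def IsSource (n : ℕ) (p : Fin n → ℝ) : Prop :=
  (∀ i, 0 < p i) ∧ (∑ i, p i = 1) ∧ (∀ i j : Fin n, i ≤ j → p j ≤ p i)

/-- A codeword-length vector: positive integer lengths satisfying the Kraft inequality. -/
def IsCLV (n : ℕ) (l : Fin n → ℤ) : Prop :=
  (∀ i, 1 ≤ l i) ∧ (∑ i, (2:ℝ) ^ (-(l i)) ≤ 1)

/-- Maximum pointwise redundancy `R*(l,p) = max_i (l(i) + lg p(i))`. -/
noncomputable def Rstar (n : ℕ) (l : Fin n → ℤ) (p : Fin n → ℝ) : ℝ :=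
  ⨆ i : Fin n, ((l i : ℝ) + Real.logb 2 (p i))

/-- Minimum maximum pointwise redundancy over all codeword-length vectors. -/
noncomputable def RstarOpt (n : ℕ) (p : Fin n → ℝ) : ℝ :=
  sInf {r : ℝ | ∃ l : Fin n → ℤ, IsCLV n l ∧ Rstar n l p = r}

/-! Let `q = (1 - p₁) / (2^ν - 2)` be the common probability of the other symbols; the bounds on
`p₁` say exactly `q < p₁ < 2q`. Lengths `ν - 1` for the first symbol and `ν` for the rest fill the
Kraft sum exactly and have redundancy `ν + lg q` (the first symbol only reaches
`ν - 1 + lg p₁ < ν + lg q`). Any redundancy below `ν + lg q` would force length `≤ ν - 1` on the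
`2^ν - 2` other symbols, which alone exhaust the Kraft sum once `2^ν ≥ 4`. At redundancy exactly
`ν + lg q` the other lengths are `≤ ν` and `p₁ > q` gives `l(1) < ν`; the Kraft sum then leaves at
most `2^{-(ν-1)}` for the first symbol, so `l(1) = ν - 1`. -/

open Real Finset

lemma le_Rstar {n : ℕ} (l : Fin n → ℤ) (p : Fin n → ℝ) (i : Fin n) :
    (l i : ℝ) + logb 2 (p i) ≤ Rstar n l p :=
  le_ciSup (f := fun j => (l j : ℝ) + logb 2 (p j)) (Set.finite_range _).bddAbove i

lemma Rstar_le_iff {n : ℕ} [Nonempty (Fin n)] {l : Fin n → ℤ} {p : Fin n → ℝ} {r : ℝ} :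
    Rstar n l p ≤ r ↔ ∀ i, (l i : ℝ) + logb 2 (p i) ≤ r :=
  ciSup_le_iff (Set.finite_range _).bddAbove

lemma RstarOpt_eq_of_forall_le {n : ℕ} {p : Fin n → ℝ} {l₀ : Fin n → ℤ} (hl₀ : IsCLV n l₀)
    (h : ∀ l, IsCLV n l → Rstar n l₀ p ≤ Rstar n l p) : RstarOpt n p = Rstar n l₀ p :=
  IsLeast.csInf_eq ⟨⟨l₀, hl₀, rfl⟩, by rintro _ ⟨l, hl, rfl⟩; exact h l hl⟩

section SumOff

variable {α : Type*} [Fintype α] [DecidableEq α] (f : α → ℝ) (a : α) (c : ℝ)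

lemma sum_erase_const_eq :
    ∑ _i ∈ univ.erase a, c = ((Fintype.card α : ℝ) - 1) * c := by
  rw [sum_const, card_erase_of_mem (mem_univ a), card_univ, nsmul_eq_mul,
    Nat.cast_pred (Fintype.card_pos_iff.mpr ⟨a⟩)]

lemma sum_eq_apply_add_of_eq_off (hf : ∀ i ≠ a, f i = c) :
    ∑ i, f i = f a + ((Fintype.card α : ℝ) - 1) * c := by
  rw [← add_sum_erase _ f (mem_univ a), ← sum_erase_const_eq a c,
    sum_congr rfl fun i hi => hf i (ne_of_mem_erase hi)]

lemma apply_add_le_sum_of_le_off (hf : ∀ i ≠ a, c ≤ f i) :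
    f a + ((Fintype.card α : ℝ) - 1) * c ≤ ∑ i, f i := by
  rw [← add_sum_erase _ f (mem_univ a), ← sum_erase_const_eq a c]
  gcongr with i hi
  exact hf i (ne_of_mem_erase hi)

end SumOff

lemma isSource_of_eq_off_zero {n : ℕ} (hn : 0 < n) {p : Fin n → ℝ} {a b : ℝ}
    (hp₀ : p ⟨0, hn⟩ = a) (hp : ∀ i ≠ ⟨0, hn⟩, p i = b) (hb : 0 < b) (hba : b ≤ a)
    (hsum : a + ((n : ℝ) - 1) * b = 1) : IsSource n p := by
  have hp_le : ∀ i, b ≤ p i := fun i => by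
    rcases eq_or_ne i ⟨0, hn⟩ with rfl | hi
    exacts [hp₀ ▸ hba, (hp i hi).ge]
  refine ⟨fun i => hb.trans_le (hp_le i), ?_, fun i j hij => ?_⟩
  · rw [sum_eq_apply_add_of_eq_off p _ b hp, Fintype.card_fin, hp₀, hsum]
  · rcases eq_or_ne j ⟨0, hn⟩ with rfl | hj
    · rw [show i = ⟨0, hn⟩ from Fin.ext (Nat.le_zero.mp hij)]
    · exact (hp j hj).trans_le (hp_le i)

def oneShorterAt {n : ℕ} (i₀ : Fin n) (k : ℤ) (i : Fin n) : ℤ :=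
  if i = i₀ then k - 1 else k

section TwoLevel

variable {n ν : ℕ} {p : Fin n → ℝ} {i₀ : Fin n} {a b : ℝ}

@[simp]
lemma oneShorterAt_self (k : ℤ) : oneShorterAt i₀ k i₀ = k - 1 := if_pos rfl

@[simp]
lemma oneShorterAt_of_ne {i : Fin n} (hi : i ≠ i₀) (k : ℤ) : oneShorterAt i₀ k i = k :=
  if_neg hi

lemma two_pow_mul_two_zpow_neg (ν : ℕ) : (2 : ℝ) ^ ν * 2 ^ (-(ν : ℤ)) = 1 := by
  rw [zpow_neg, zpow_natCast, mul_inv_cancel₀ (by positivity)]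

lemma isCLV_oneShorterAt (hν : 2 ≤ ν) (hn : (n : ℝ) + 1 ≤ 2 ^ ν) :
    IsCLV n (oneShorterAt i₀ ν) := by
  refine ⟨fun i => by unfold oneShorterAt; split_ifs <;> omega, ?_⟩
  rw [sum_eq_apply_add_of_eq_off _ i₀ _ fun i hi => by rw [oneShorterAt_of_ne hi],
    oneShorterAt_self, Fintype.card_fin, neg_sub', zpow_sub₀ two_ne_zero, zpow_neg_one,
    div_inv_eq_mul]
  have := mul_le_mul_of_nonneg_right hn (zpow_pos (zero_lt_two (α := ℝ)) (-(ν : ℤ))).le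
  linarith [two_pow_mul_two_zpow_neg ν]

lemma Rstar_oneShorterAt [Nontrivial (Fin n)] (hp₀ : p i₀ = a) (hp : ∀ i ≠ i₀, p i = b)
    (ha : 0 < a) (hb : 0 < b) (hab : a ≤ 2 * b) :
    Rstar n (oneShorterAt i₀ ν) p = ν + logb 2 b := by
  obtain ⟨i₁, hi₁⟩ := exists_ne i₀
  refine le_antisymm (Rstar_le_iff.mpr fun i => ?_) ?_
  · rcases eq_or_ne i i₀ with rfl | hi
    · have : logb 2 a ≤ 1 + logb 2 b := by
        rw [← logb_self_eq_one one_lt_two, ← logb_mul two_ne_zero hb.ne']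
        exact logb_le_logb_of_le one_lt_two ha hab
      rw [oneShorterAt_self, hp₀]
      push_cast
      linarith
    · simp [hi, hp i hi]
  · simpa [hi₁, hp i₁ hi₁] using le_Rstar (oneShorterAt i₀ ν) p i₁

lemma le_Rstar_of_isCLV (hn : (2 : ℝ) ^ ν ≤ 2 * ((n : ℝ) - 1)) (hp : ∀ i ≠ i₀, p i = b)
    {l : Fin n → ℤ} (hl : IsCLV n l) : ν + logb 2 b ≤ Rstar n l p := by
  by_contra! hlt
  have hshort : ∀ i ≠ i₀, (2 : ℝ) ^ (-(ν : ℤ)) * 2 ≤ 2 ^ (-l i) := fun i hi => by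
    have := (le_Rstar l p i).trans_lt hlt
    rw [hp i hi] at this
    have : l i < ν := by exact_mod_cast (by linarith : (l i : ℝ) < ν)
    rw [← zpow_add_one₀ two_ne_zero]
    exact zpow_le_zpow_right₀ one_le_two (by omega)
  have hkraft := (apply_add_le_sum_of_le_off _ i₀ _ hshort).trans hl.2
  rw [Fintype.card_fin] at hkraft
  have := mul_le_mul_of_nonneg_right hn (zpow_pos (zero_lt_two (α := ℝ)) (-(ν : ℤ))).le
  linarith [two_pow_mul_two_zpow_neg ν, zpow_pos (zero_lt_two (α := ℝ)) (-l i₀)]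

lemma length_eq_of_Rstar_eq (hn : (2 : ℝ) ^ ν < n + 3) (hp₀ : p i₀ = a)
    (hp : ∀ i ≠ i₀, p i = b) (hb : 0 < b) (hba : b < a) {l : Fin n → ℤ} (hl : IsCLV n l)
    (h : Rstar n l p = ν + logb 2 b) : l i₀ = ν - 1 := by
  have hle : ∀ i, (l i : ℝ) + logb 2 (p i) ≤ ν + logb 2 b := h ▸ le_Rstar l p
  have hlong : ∀ i ≠ i₀, (2 : ℝ) ^ (-(ν : ℤ)) ≤ 2 ^ (-l i) := fun i hi => by
    have := hle i
    rw [hp i hi] at this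
    have : l i ≤ ν := by exact_mod_cast (by linarith : (l i : ℝ) ≤ ν)
    exact zpow_le_zpow_right₀ one_le_two (by omega)
  have hfirst : l i₀ < ν := by
    have := hle i₀
    rw [hp₀] at this
    have := logb_lt_logb one_lt_two hb hba
    exact_mod_cast (by linarith : (l i₀ : ℝ) < ν)
  have hkraft := (apply_add_le_sum_of_le_off _ i₀ _ hlong).trans hl.2
  rw [Fintype.card_fin] at hkraft
  have hsmall : (2 : ℝ) ^ (-l i₀) < 2 ^ (-(ν : ℤ)) * 2 ^ (2 : ℤ) := by
    have := mul_lt_mul_of_pos_right hn (zpow_pos (zero_lt_two (α := ℝ)) (-(ν : ℤ)))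
    rw [show (2 : ℝ) ^ (2 : ℤ) = 4 by norm_num]
    linarith [two_pow_mul_two_zpow_neg ν]
  rw [← zpow_add₀ two_ne_zero, zpow_lt_zpow_iff_right₀ one_lt_two] at hsmall
  omega

end TwoLevel

lemma tail_bounds {ν : ℕ} (hν : 2 ≤ ν) {p₁ : ℝ} (h1 : 1 / ((2 : ℝ) ^ ν - 1) < p₁)
    (h2 : p₁ < (2 : ℝ) ^ (-(ν : ℤ) + 1)) :
    p₁ < 1 ∧ (1 - p₁) / ((2 : ℝ) ^ ν - 2) < p₁ ∧
      p₁ ≤ 2 * ((1 - p₁) / ((2 : ℝ) ^ ν - 2)) := by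
  have h4 : (4 : ℝ) ≤ 2 ^ ν := calc
    (4 : ℝ) = 2 ^ 2 := by norm_num
    _ ≤ 2 ^ ν := pow_le_pow_right₀ one_le_two hν
  rw [zpow_add_one₀ two_ne_zero, zpow_neg, zpow_natCast, ← div_eq_inv_mul,
    lt_div_iff₀ (by positivity)] at h2
  rw [div_lt_iff₀ (by linarith)] at h1
  rw [mul_div_assoc', div_lt_iff₀ (by linarith), le_div_iff₀ (by linarith)]
  exact ⟨by nlinarith, by nlinarith, by nlinarith⟩

theorem stmt18 (ν : ℕ) (hν : 2 ≤ ν) (p₁ : ℝ)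
    (h1 : 1 / ((2:ℝ) ^ ν - 1) < p₁) (h2 : p₁ < (2:ℝ) ^ (-(ν:ℤ) + 1))
    (p : Fin (2 ^ ν - 1) → ℝ)
    (h0 : p ⟨0, by have := Nat.one_lt_two_pow_iff.mpr (by omega : ν ≠ 0); omega⟩ = p₁)
    (hrest : ∀ i : Fin (2 ^ ν - 1), 0 < i.val →
      p i = (1 - p₁) / ((2:ℝ) ^ ν - 2)) :
    IsSource (2 ^ ν - 1) p ∧
      RstarOpt (2 ^ ν - 1) p =
        (ν:ℝ) + Real.logb 2 (1 - p₁) - Real.logb 2 ((2:ℝ) ^ ν - 2) ∧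
      ∀ l : Fin (2 ^ ν - 1) → ℤ, IsCLV (2 ^ ν - 1) l →
        Rstar (2 ^ ν - 1) l p = RstarOpt (2 ^ ν - 1) p →
        l ⟨0, by have := Nat.one_lt_two_pow_iff.mpr (by omega : ν ≠ 0); omega⟩ = (ν:ℤ) - 1 := by
  have h4 : 4 ≤ 2 ^ ν := by simpa using Nat.pow_le_pow_right two_pos hν
  have hn : ((2 ^ ν - 1 : ℕ) : ℝ) = 2 ^ ν - 1 := by
    rw [Nat.cast_sub Nat.one_le_two_pow]
    push_cast
    rfl
  have h4' : (4 : ℝ) ≤ 2 ^ ν := by exact_mod_cast h4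
  have hne : (2 : ℝ) ^ ν - 2 ≠ 0 := by linarith
  obtain ⟨hp₁, hbp, hpb⟩ := tail_bounds hν h1 h2
  have hb : 0 < (1 - p₁) / ((2 : ℝ) ^ ν - 2) := div_pos (by linarith) (by linarith)
  have hp : ∀ i ≠ ⟨0, by omega⟩, p i = (1 - p₁) / ((2 : ℝ) ^ ν - 2) :=
    fun i hi => hrest i (Nat.pos_of_ne_zero fun h => hi (Fin.ext h))
  have : Nontrivial (Fin (2 ^ ν - 1)) := Fin.nontrivial_iff_two_le.mpr (by omega)
  have hopt : RstarOpt (2 ^ ν - 1) p = ν + logb 2 ((1 - p₁) / ((2 : ℝ) ^ ν - 2)) := by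
    rw [RstarOpt_eq_of_forall_le (isCLV_oneShorterAt hν (by linarith)) fun l hl => ?_]
      <;> rw [Rstar_oneShorterAt h0 hp (hb.trans hbp) hb hpb]
    exact le_Rstar_of_isCLV (by linarith) hp hl
  refine ⟨isSource_of_eq_off_zero _ h0 hp hb hbp.le ?_, ?_,
    fun l hl h => length_eq_of_Rstar_eq (by linarith) h0 hp hb hbp hl (h.trans hopt)⟩
  · rw [hn, show (2 : ℝ) ^ ν - 1 - 1 = 2 ^ ν - 2 by ring, mul_div_cancel₀ _ hne]
    ring
  · rw [hopt, logb_div (by linarith) hne]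
    ring
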